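/- arXiv:2201.08737 — 2 statements merged into one kernel-verified Lean document; each statement's English description precedes it below -/
import Mathlib

section
/- Let L_{[1]},…,L_{[N]} be reals with |L_{[1]}| ≥ … ≥ |L_{[N]}| and λ real. If ∑ᵢ₌₁^{k-1} L_{[i]} - (N-k+1)·|L_{[k-1]}| < λ, then ∑ᵢ₌₁^{k-2} L_{[i]} - (N-k+2)·|L_{[k-2]}| < λ, for any k with 3 ≤ k ≤ N+1. -/
/-! Passing from `k - 1` to `k - 2` received transmissions removes the summand `L_{[k-1]}`,
which is at least `-|L_{[k-1]}|`, and raises the multiplier of the absolute value by one;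
since `|L_{[k-1]}| ≤ |L_{[k-2]}|`, the new lower bound is no larger than the old one. -/

theorem sub_succ_mul_abs_le_add_sub_mul_abs {α : Type*} [CommRing α] [LinearOrder α]
    [IsStrictOrderedRing α] (s : α) {x y m : α} (hm : 0 ≤ m) (hxy : |x| ≤ |y|) :
    s - (m + 1) * |y| ≤ s + x - m * |x| := by
  have hmul : m * |x| ≤ m * |y| := mul_le_mul_of_nonneg_left hxy hm
  linarith [neg_abs_le x]

/-- In the OT scheme, if the FC cannot decide H₁ after the first
k-1 transmissions (lower bound below λ), it could not decide H₁ after the first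
k-2 transmissions either. -/
theorem cannot_decide_H1_monotone (N : ℕ) (L : ℕ → ℝ) (lam : ℝ)
    (hord : ∀ i j, 1 ≤ i → i ≤ j → j ≤ N → |L j| ≤ |L i|)
    (k : ℕ) (hk3 : 3 ≤ k) (hkN : k ≤ N + 1)
    (h : (∑ i ∈ Finset.Icc 1 (k - 1), L i) - ((N : ℝ) - k + 1) * |L (k - 1)| < lam) :
    (∑ i ∈ Finset.Icc 1 (k - 2), L i) - ((N : ℝ) - k + 2) * |L (k - 2)| < lam := by
  obtain ⟨n, rfl⟩ : ∃ n, k = n + 2 := ⟨k - 2, by omega⟩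
  rw [show n + 2 - 1 = n + 1 by omega, Finset.sum_Icc_succ_top (by omega)] at h
  rw [Nat.add_sub_cancel]
  have hm : (0 : ℝ) ≤ N - (n + 2 : ℕ) + 1 := by
    have : ((n + 2 : ℕ) : ℝ) ≤ N + 1 := by exact_mod_cast hkN
    linarith
  calc (∑ i ∈ Finset.Icc 1 n, L i) - ((N : ℝ) - (n + 2 : ℕ) + 2) * |L n|
      = (∑ i ∈ Finset.Icc 1 n, L i) - ((N - (n + 2 : ℕ) + 1) + 1) * |L n| := by ring
    _ ≤ (∑ i ∈ Finset.Icc 1 n, L i) + L (n + 1) - (N - (n + 2 : ℕ) + 1) * |L (n + 1)| :=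
      sub_succ_mul_abs_le_add_sub_mul_abs _ hm (hord n (n + 1) (by omega) (by omega) (by omega))
    _ < lam := h
end

section
/- Let x₁ ≥ … ≥ x_N be reals with mean x̄ and empirical variance v = (1/(N-1))∑(xᵢ-x̄)². For any k ∈ {1,…,N}, with cᵢ = 1 for i ≤ k and cᵢ = 0 for i > k, the sum of the k largest values satisfies k·x̄ - √(k(1 - k/N)(N-1)v) ≤ ∑ᵢ₌₁ᵏ xᵢ ≤ k·x̄ + √(k(1 - k/N)(N-1)v). -/
/-!
Centre the data at its mean `m`. Since the deviations `xᵢ - m` sum to zero, the deviation sum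
over any `k`-subset `s` of the `N` indices equals `∑ᵢ cᵢ (xᵢ - m)` for the centred indicator
`cᵢ = 1_s(i) - k/N`, whose squared norm is `k (1 - k/N)`. Cauchy–Schwarz then bounds
`|∑_{i ∈ s} xᵢ - k m|` by `√(k (1 - k/N) ∑ᵢ (xᵢ - m)²)`.
-/

open Finset

namespace Finset

variable {ι : Type*} {s t : Finset ι}

theorem sum_sub_average_eq_zero (t : Finset ι) (x : ι → ℝ) :
    ∑ i ∈ t, (x i - (∑ j ∈ t, x j) / #t) = 0 := by
  rcases t.eq_empty_or_nonempty with rfl | ht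
  · simp
  · rw [sum_sub_distrib, sum_const, nsmul_eq_mul, mul_div_cancel₀ _ (by simpa using ht.ne_empty),
      sub_self]

theorem sum_sq_ite_mem_sub_card_div_card [DecidableEq ι] (hst : s ⊆ t) :
    ∑ i ∈ t, ((if i ∈ s then 1 else 0) - (#s : ℝ) / #t) ^ 2 = #s * (1 - (#s : ℝ) / #t) := by
  have hsq : ∀ i, ((if i ∈ s then 1 else 0) - (#s : ℝ) / #t) ^ 2
      = (if i ∈ s then 1 - 2 * ((#s : ℝ) / #t) else 0) + ((#s : ℝ) / #t) ^ 2 := by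
    intro i; split_ifs <;> ring
  simp_rw [hsq, sum_add_distrib, sum_ite_mem, inter_eq_right.2 hst, sum_const, nsmul_eq_mul]
  rcases t.eq_empty_or_nonempty with rfl | ht
  · simp
  · have : (#t : ℝ) ≠ 0 := by simpa using ht.ne_empty
    field_simp
    ring

theorem sq_sum_sub_average_le (hst : s ⊆ t) (x : ι → ℝ) :
    (∑ i ∈ s, (x i - (∑ j ∈ t, x j) / #t)) ^ 2
      ≤ #s * (1 - (#s : ℝ) / #t) * ∑ i ∈ t, (x i - (∑ j ∈ t, x j) / #t) ^ 2 := by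
  classical
  set m := (∑ j ∈ t, x j) / #t
  set c : ι → ℝ := fun i ↦ (if i ∈ s then 1 else 0) - (#s : ℝ) / #t
  have hsum : ∑ i ∈ s, (x i - m) = ∑ i ∈ t, c i * (x i - m) := by
    simp only [c, sub_mul, ite_mul, one_mul, zero_mul]
    rw [sum_sub_distrib (s := t), sum_ite_mem, inter_eq_right.2 hst, ← mul_sum,
      sum_sub_average_eq_zero, mul_zero, sub_zero]
  rw [hsum, ← sum_sq_ite_mem_sub_card_div_card hst]
  exact sum_mul_sq_le_sq_mul_sq t c _

end Finset

theorem top_k_sum_bounds_general (N : ℕ) (x : ℕ → ℝ)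
    (xbar v : ℝ)
    (hxbar : xbar = (∑ i ∈ Finset.Icc 1 N, x i) / N)
    (hv : v = (1 / ((N : ℝ) - 1)) * ∑ i ∈ Finset.Icc 1 N, (x i - xbar) ^ 2)
    (k : ℕ) (hkN : k ≤ N) :
    (k : ℝ) * xbar - Real.sqrt ((k : ℝ) * (1 - (k : ℝ) / N) * ((N : ℝ) - 1) * v)
        ≤ ∑ i ∈ Finset.Icc 1 k, x i
    ∧ ∑ i ∈ Finset.Icc 1 k, x i
        ≤ (k : ℝ) * xbar + Real.sqrt ((k : ℝ) * (1 - (k : ℝ) / N) * ((N : ℝ) - 1) * v) := by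
  have hCS := sq_sum_sub_average_le (Icc_subset_Icc_right (a := 1) hkN) x
  simp only [Nat.card_Icc, add_tsub_cancel_right, ← hxbar] at hCS
  have hdev : ∑ i ∈ Icc 1 k, (x i - xbar) = ∑ i ∈ Icc 1 k, x i - k * xbar := by
    simp [sum_sub_distrib]
  have hvar : ∑ i ∈ Icc 1 N, (x i - xbar) ^ 2 = ((N : ℝ) - 1) * v := by
    rcases eq_or_ne (N : ℝ) 1 with hN | hN
    · -- `v` is the junk value `1 / 0 * _` here, but `N - 1 = 0` and the single deviation vanishes.
      obtain rfl : N = 1 := by exact_mod_cast hN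
      simp [hxbar]
    · rw [hv, ← mul_assoc, mul_one_div_cancel (sub_ne_zero.2 hN), one_mul]
  have habs := Real.abs_le_sqrt (hCS.trans_eq (by rw [hvar, ← mul_assoc]))
  rw [hdev, abs_le] at habs
  constructor <;> linarith [habs.1, habs.2]

/-- Bounds on the sum of the k largest values:
k·x̄ - √(k(1-k/N)(N-1)v) ≤ ∑ᵢ₌₁ᵏ xᵢ ≤ k·x̄ + √(k(1-k/N)(N-1)v). -/
theorem top_k_sum_bounds (N : ℕ) (hN : 1 ≤ N) (x : ℕ → ℝ)
    (hord : ∀ i j, 1 ≤ i → i ≤ j → j ≤ N → x j ≤ x i)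
    (xbar v : ℝ)
    (hxbar : xbar = (∑ i ∈ Finset.Icc 1 N, x i) / N)
    (hv : v = (1 / ((N : ℝ) - 1)) * ∑ i ∈ Finset.Icc 1 N, (x i - xbar) ^ 2)
    (k : ℕ) (hk1 : 1 ≤ k) (hkN : k ≤ N) :
    (k : ℝ) * xbar - Real.sqrt ((k : ℝ) * (1 - (k : ℝ) / N) * ((N : ℝ) - 1) * v)
        ≤ ∑ i ∈ Finset.Icc 1 k, x i
    ∧ ∑ i ∈ Finset.Icc 1 k, x i
        ≤ (k : ℝ) * xbar + Real.sqrt ((k : ℝ) * (1 - (k : ℝ) / N) * ((N : ℝ) - 1) * v) :=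
  top_k_sum_bounds_general N x xbar v hxbar hv k hkN
end
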